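/- arXiv:1009.4519 — 6 statements merged into one kernel-verified Lean document; each statement's English description precedes it below -/
import Mathlib

section
/- Let G'' be a Lindelöf topological group, G a topological group, and j : G → G'' a continuous surjective open group homomorphism that admits a continuous local section on some open neighbourhood of the identity of G''. Then there exists a measurable section σ : G'' → G of j (i.e. j ∘ σ = id) which is continuous on some open neighbourhood of the identity of G''. -/
/-!
Cover `G''` by countably many translates `j (g n) • U` with `g 0 = 1` (Lindelöf property) and,
on the translate with the least index containing `x`, use the transported local section
`x ↦ g n * s ((j (g n))⁻¹ * x)`, with `s` extended by `1` off `U` to make it measurable.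
Choosing the least index is a countable measurable selection, and on `U` it always picks
`n = 0`, where the glued section is `s` itself.
-/

open Set Function
open scoped Pointwise

theorem exists_seq_smul_cover_of_lindelofSpace {H : Type*} [Group H] [TopologicalSpace H]
    [ContinuousMul H] [LindelofSpace H] {U : Set H} (hU : IsOpen U) (hU1 : (1 : H) ∈ U) :
    ∃ f : ℕ → H, ∀ x, ∃ n, x ∈ f n • U := by
  obtain ⟨f, hf⟩ := isLindelof_univ.indexed_countable_subcover (fun x : H => x • U)
    (fun x => hU.smul x) fun x _ =>
      mem_iUnion.2 ⟨x, by simpa using smul_mem_smul_set (a := x) hU1⟩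
  exact ⟨f, fun x => mem_iUnion.1 (hf (mem_univ x))⟩

theorem MonoidHom.exists_seq_smul_cover_of_surjective {G H : Type*} [Group G] [Group H]
    [TopologicalSpace H] [ContinuousMul H] [LindelofSpace H] (j : G →* H) (hj : Surjective j)
    {U : Set H} (hU : IsOpen U) (hU1 : (1 : H) ∈ U) :
    ∃ g : ℕ → G, g 0 = 1 ∧ ∀ x, ∃ n, x ∈ j (g n) • U := by
  obtain ⟨f, hf⟩ := exists_seq_smul_cover_of_lindelofSpace hU hU1
  refine ⟨fun | 0 => 1 | k + 1 => surjInv hj (f k), rfl, fun x => ?_⟩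
  obtain ⟨n, hn⟩ := hf x
  exact ⟨n + 1, by simpa [surjInv_eq hj] using hn⟩

theorem stmt_0_general {G G'' : Type*} [Group G] [TopologicalSpace G] [IsTopologicalGroup G]
    [MeasurableSpace G] [BorelSpace G]
    [Group G''] [TopologicalSpace G''] [IsTopologicalGroup G''] [LindelofSpace G'']
    [MeasurableSpace G''] [BorelSpace G'']
    (j : G →* G'') (hjsurj : Function.Surjective j)
    (U : Set G'') (hU : IsOpen U) (hU1 : (1 : G'') ∈ U)
    (s : G'' → G) (hs : ∀ x ∈ U, j (s x) = x) (hsc : ContinuousOn s U) :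
    ∃ σ : G'' → G, Measurable σ ∧ (∀ x, j (σ x) = x) ∧
      ∃ V : Set G'', IsOpen V ∧ (1 : G'') ∈ V ∧ ContinuousOn σ V := by
  classical
  obtain ⟨g, hg0, hcover⟩ := j.exists_seq_smul_cover_of_surjective hjsurj hU hU1
  set t : G'' → G := U.piecewise s 1
  have ht : Measurable t := hsc.measurable_piecewise continuousOn_const hU.measurableSet
  have hts : ∀ x ∈ U, t x = s x := fun x hx => piecewise_eq_of_mem _ _ _ hx
  let σ (n : ℕ) (x : G'') : G := g n * t ((j (g n))⁻¹ * x)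
  have hσ (n : ℕ) : Measurable (σ n) := (ht.comp (measurable_const_mul _)).const_mul _
  have hmeas : Measurable fun x => σ (Nat.find (hcover x)) x :=
    Measurable.find (p := fun n x => x ∈ j (g n) • U) hσ
      (fun n => (hU.smul _).measurableSet) hcover
  refine ⟨fun x => σ (Nat.find (hcover x)) x, hmeas, fun x => ?_, U, hU, hU1, ?_⟩
  · set n := Nat.find (hcover x)
    have hx : (j (g n))⁻¹ * x ∈ U := mem_smul_set_iff_inv_smul_mem.1 (Nat.find_spec (hcover x))
    rw [map_mul, hts _ hx, hs _ hx, mul_inv_cancel_left]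
  · refine hsc.congr fun x hx => ?_
    have hn : Nat.find (hcover x) = 0 := Nat.find_eq_zero _ |>.2 (by simpa [hg0])
    simp [σ, hn, hg0, hts _ hx]

/-- A continuous surjective open homomorphism onto a Lindelöf topological
group admitting a continuous local section near the identity admits a global measurable
section which is continuous on a neighbourhood of the identity. -/
theorem stmt_0 {G G'' : Type*} [Group G] [TopologicalSpace G] [IsTopologicalGroup G]
    [MeasurableSpace G] [BorelSpace G]
    [Group G''] [TopologicalSpace G''] [IsTopologicalGroup G''] [LindelofSpace G'']
    [MeasurableSpace G''] [BorelSpace G'']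
    (j : G →* G'') (hjc : Continuous j) (hjsurj : Function.Surjective j) (hjopen : IsOpenMap j)
    (U : Set G'') (hU : IsOpen U) (hU1 : (1 : G'') ∈ U)
    (s : G'' → G) (hs : ∀ x ∈ U, j (s x) = x) (hsc : ContinuousOn s U) :
    ∃ σ : G'' → G, Measurable σ ∧ (∀ x, j (σ x) = x) ∧
      ∃ V : Set G'', IsOpen V ∧ (1 : G'') ∈ V ∧ ContinuousOn σ V :=
  stmt_0_general j hjsurj U hU hU1 s hs hsc
end

section
/- Let G be a topological group and A a topological G-module, and suppose 0 → A' → A → A'' → 0 is a locally split short exact sequence of topological G-modules, with a chosen measurable section σ : A'' → A of the quotient map that is continuous near the identity. Then composition with the inclusion and the quotient map gives a short exact sequence of cochain complexes 0 → C•_lcm(G,A') → C•_lcm(G,A) → C•_lcm(G,A'') → 0, where C^n_lcm(G,B) is the group of measurable maps G^n → B that are continuous on a neighbourhood of the identity of G^n. -/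
/-! All maps are degreewise composition with a map of coefficients, and equivariance of the
coefficient maps makes them commute with the coboundary. In the middle, a cochain with values in
`ker q = range i` factors through `i`, and the factor is again locally continuous measurable
because a closed embedding is both a measurable and a topological embedding. On the right, a
cochain `f''` need not take values near `0` around the identity, so one lifts the translate
`f'' - f'' 1` through `σ`, which is continuous near `0`, and adds back the constant `σ (f'' 1)`. -/

/-- A locally continuous measurable `n`-cochain: a measurable map `G^n → B` which is
continuous on some open neighbourhood of the identity of `G^n`. -/
def IsLcmCochain {G B : Type*} [Group G] [TopologicalSpace G] [MeasurableSpace G]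
    [TopologicalSpace B] [MeasurableSpace B] {n : ℕ} (f : (Fin n → G) → B) : Prop :=
  Measurable f ∧ ∃ U : Set (Fin n → G), IsOpen U ∧ (1 : Fin n → G) ∈ U ∧ ContinuousOn f U

/-- The standard inhomogeneous coboundary on cochains `G^n → B`. -/
def lcmCoboundary {G B : Type*} [Group G] [AddCommGroup B] [DistribMulAction G B] {n : ℕ}
    (f : (Fin n → G) → B) : (Fin (n + 1) → G) → B :=
  fun g => g 0 • f (fun i => g i.succ) +
    ∑ j : Fin (n + 1), ((-1 : ℤ) ^ ((j : ℕ) + 1)) • f (Fin.contractNth j (· * ·) g)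

namespace IsLcmCochain

variable {G B C : Type*} [Group G] [TopologicalSpace G] [MeasurableSpace G]
  [TopologicalSpace B] [MeasurableSpace B] [TopologicalSpace C] [MeasurableSpace C]
  {n : ℕ} {f : (Fin n → G) → B}

theorem comp_of_continuousOn (hf : IsLcmCochain f) {φ : B → C} (hφ : Measurable φ)
    {V : Set B} (hV : IsOpen V) (hfV : f 1 ∈ V) (hφV : ContinuousOn φ V) :
    IsLcmCochain (fun g => φ (f g)) := by
  obtain ⟨hfm, U, hU, hU1, hfU⟩ := hf
  refine ⟨hφ.comp hfm, U ∩ f ⁻¹' V, hfU.isOpen_inter_preimage hU hV, ⟨hU1, hfV⟩, ?_⟩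
  exact hφV.comp (hfU.mono Set.inter_subset_left) fun _ hx => hx.2

theorem comp_continuous [OpensMeasurableSpace B] [BorelSpace C] (hf : IsLcmCochain f)
    {φ : B → C} (hφ : Continuous φ) : IsLcmCochain (fun g => φ (f g)) :=
  hf.comp_of_continuousOn hφ.measurable isOpen_univ trivial hφ.continuousOn

theorem of_comp_isClosedEmbedding [BorelSpace B] [BorelSpace C] {φ : B → C}
    (hφ : Topology.IsClosedEmbedding φ) (hφf : IsLcmCochain (fun g => φ (f g))) :
    IsLcmCochain f := by
  obtain ⟨hm, U, hU, hU1, hc⟩ := hφf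
  exact ⟨hφ.measurableEmbedding.measurable_comp_iff.mp hm, U, hU, hU1,
    hφ.isEmbedding.continuousOn_iff.mpr hc⟩

theorem exists_lift_of_isClosedEmbedding [BorelSpace B] [BorelSpace C] {φ : B → C}
    (hφ : Topology.IsClosedEmbedding φ) {f : (Fin n → G) → C} (hf : IsLcmCochain f)
    (hrange : ∀ g, f g ∈ Set.range φ) :
    ∃ f' : (Fin n → G) → B, IsLcmCochain f' ∧ ∀ g, φ (f' g) = f g := by
  choose f' hf' using hrange
  have hφf' : (fun g => φ (f' g)) = f := funext hf'
  exact ⟨f', of_comp_isClosedEmbedding hφ (hφf' ▸ hf), hf'⟩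

theorem exists_lift_of_section {A A'' : Type*} [AddCommGroup A] [TopologicalSpace A]
    [ContinuousAdd A] [MeasurableSpace A] [BorelSpace A]
    [AddCommGroup A''] [TopologicalSpace A''] [ContinuousSub A'']
    [MeasurableSpace A''] [BorelSpace A''] (q : A →+ A'') (σ : A'' → A)
    (hσmeas : Measurable σ) (hσsec : ∀ x, q (σ x) = x)
    (hσcont : ∃ V : Set A'', IsOpen V ∧ (0 : A'') ∈ V ∧ ContinuousOn σ V)
    {f'' : (Fin n → G) → A''} (hf'' : IsLcmCochain f'') :
    ∃ f : (Fin n → G) → A, IsLcmCochain f ∧ ∀ g, q (f g) = f'' g := by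
  obtain ⟨V, hV, hV0, hσV⟩ := hσcont
  have hshift : IsLcmCochain (fun g => f'' g - f'' 1) :=
    hf''.comp_continuous (continuous_sub_right (f'' 1))
  have hlift : IsLcmCochain (fun g => σ (f'' g - f'' 1)) :=
    hshift.comp_of_continuousOn hσmeas hV (by simpa using hV0) hσV
  refine ⟨fun g => σ (f'' g - f'' 1) + σ (f'' 1),
    hlift.comp_continuous (continuous_add_const _), fun g => ?_⟩
  simp only [map_add, hσsec, sub_add_cancel]

end IsLcmCochain

theorem lcmCoboundary_comp {G B C : Type*} [Group G] [AddCommGroup B] [DistribMulAction G B]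
    [AddCommGroup C] [DistribMulAction G C] (φ : B →+ C)
    (hφ : ∀ (g : G) (b : B), φ (g • b) = g • φ b) {n : ℕ} (f : (Fin n → G) → B) :
    (fun g => φ (lcmCoboundary f g)) = lcmCoboundary (fun g => φ (f g)) := by
  funext g
  simp only [lcmCoboundary, map_add, map_sum, map_zsmul, hφ]

theorem stmt_6_general {G A' A A'' : Type*} [Group G] [TopologicalSpace G]
    [MeasurableSpace G]
    [AddCommGroup A'] [TopologicalSpace A']
    [MeasurableSpace A'] [BorelSpace A'] [DistribMulAction G A']
    [AddCommGroup A] [TopologicalSpace A] [IsTopologicalAddGroup A]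
    [MeasurableSpace A] [BorelSpace A] [DistribMulAction G A]
    [AddCommGroup A''] [TopologicalSpace A''] [IsTopologicalAddGroup A'']
    [MeasurableSpace A''] [BorelSpace A''] [DistribMulAction G A'']
    (i : A' →+ A) (q : A →+ A'')
    (hieq : ∀ (g : G) (a : A'), i (g • a) = g • i a)
    (hqeq : ∀ (g : G) (a : A), q (g • a) = g • q a)
    (hiemb : Topology.IsClosedEmbedding i) (hqc : Continuous q)
    (hexact : Set.range i = {a : A | q a = 0})
    (σ : A'' → A) (hσmeas : Measurable σ) (hσsec : ∀ x, q (σ x) = x)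
    (hσcont : ∃ V : Set A'', IsOpen V ∧ (0 : A'') ∈ V ∧ ContinuousOn σ V) :
    ∀ n : ℕ,
      -- composition with `i` and `q` preserves locally continuous measurable cochains
      (∀ f' : (Fin n → G) → A', IsLcmCochain f' → IsLcmCochain (fun g => i (f' g))) ∧
      (∀ f : (Fin n → G) → A, IsLcmCochain f → IsLcmCochain (fun g => q (f g))) ∧
      -- the induced maps are maps of complexes
      (∀ f' : (Fin n → G) → A',
        (fun g => i (lcmCoboundary f' g)) = lcmCoboundary (fun g => i (f' g))) ∧
      (∀ f : (Fin n → G) → A,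
        (fun g => q (lcmCoboundary f g)) = lcmCoboundary (fun g => q (f g))) ∧
      -- exactness: injectivity on the left
      (∀ f' g' : (Fin n → G) → A',
        (fun g => i (f' g)) = (fun g => i (g' g)) → f' = g') ∧
      -- exactness in the middle
      (∀ f : (Fin n → G) → A, IsLcmCochain f → (∀ g, q (f g) = 0) →
        ∃ f' : (Fin n → G) → A', IsLcmCochain f' ∧ ∀ g, i (f' g) = f g) ∧
      -- surjectivity on the right
      (∀ f'' : (Fin n → G) → A'', IsLcmCochain f'' →
        ∃ f : (Fin n → G) → A, IsLcmCochain f ∧ ∀ g, q (f g) = f'' g) := by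
  intro n
  refine ⟨fun f' hf' => hf'.comp_continuous hiemb.continuous,
    fun f hf => hf.comp_continuous hqc, lcmCoboundary_comp i hieq, lcmCoboundary_comp q hqeq,
    fun f' g' h => funext fun g => hiemb.injective (congrFun h g), ?_,
    fun f'' hf'' => IsLcmCochain.exists_lift_of_section q σ hσmeas hσsec hσcont hf''⟩
  intro f hf hq0
  exact IsLcmCochain.exists_lift_of_isClosedEmbedding hiemb hf fun g => hexact ▸ hq0 g

/-- A locally split short exact sequence `0 → A' → A → A'' → 0` of
topological `G`-modules, with a chosen measurable section `σ` of the quotient map which is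
continuous near the identity, induces in every degree a short exact sequence of the
complexes of locally continuous measurable cochains. -/
theorem stmt_6 {G A' A A'' : Type*} [Group G] [TopologicalSpace G] [IsTopologicalGroup G]
    [MeasurableSpace G] [BorelSpace G]
    [AddCommGroup A'] [TopologicalSpace A'] [IsTopologicalAddGroup A']
    [MeasurableSpace A'] [BorelSpace A'] [DistribMulAction G A'] [ContinuousSMul G A']
    [AddCommGroup A] [TopologicalSpace A] [IsTopologicalAddGroup A]
    [MeasurableSpace A] [BorelSpace A] [DistribMulAction G A] [ContinuousSMul G A]
    [AddCommGroup A''] [TopologicalSpace A''] [IsTopologicalAddGroup A'']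
    [MeasurableSpace A''] [BorelSpace A''] [DistribMulAction G A''] [ContinuousSMul G A'']
    (i : A' →+ A) (q : A →+ A'')
    (hieq : ∀ (g : G) (a : A'), i (g • a) = g • i a)
    (hqeq : ∀ (g : G) (a : A), q (g • a) = g • q a)
    (hiemb : Topology.IsClosedEmbedding i) (hqc : Continuous q) (hqo : IsOpenMap q)
    (hqsurj : Function.Surjective q)
    (hexact : Set.range i = {a : A | q a = 0})
    (σ : A'' → A) (hσmeas : Measurable σ) (hσsec : ∀ x, q (σ x) = x)
    (hσcont : ∃ V : Set A'', IsOpen V ∧ (0 : A'') ∈ V ∧ ContinuousOn σ V) :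
    ∀ n : ℕ,
      -- composition with `i` and `q` preserves locally continuous measurable cochains
      (∀ f' : (Fin n → G) → A', IsLcmCochain f' → IsLcmCochain (fun g => i (f' g))) ∧
      (∀ f : (Fin n → G) → A, IsLcmCochain f → IsLcmCochain (fun g => q (f g))) ∧
      -- the induced maps are maps of complexes
      (∀ f' : (Fin n → G) → A',
        (fun g => i (lcmCoboundary f' g)) = lcmCoboundary (fun g => i (f' g))) ∧
      (∀ f : (Fin n → G) → A,
        (fun g => q (lcmCoboundary f g)) = lcmCoboundary (fun g => q (f g))) ∧
      -- exactness: injectivity on the left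
      (∀ f' g' : (Fin n → G) → A',
        (fun g => i (f' g)) = (fun g => i (g' g)) → f' = g') ∧
      -- exactness in the middle
      (∀ f : (Fin n → G) → A, IsLcmCochain f → (∀ g, q (f g) = 0) →
        ∃ f' : (Fin n → G) → A', IsLcmCochain f' ∧ ∀ g, i (f' g) = f g) ∧
      -- surjectivity on the right
      (∀ f'' : (Fin n → G) → A'', IsLcmCochain f'' →
        ∃ f : (Fin n → G) → A, IsLcmCochain f ∧ ∀ g, q (f g) = f'' g) :=
  stmt_6_general i q hieq hqeq hiemb hqc hexact σ hσmeas hσsec hσcont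
end

section
/- Let E and G be locally compact second countable topological groups (hence Polish). Every measurable group homomorphism σ : E → G is continuous (Banach's theorem). -/
/-!
Given a neighbourhood `W` of `1` in `G`, countably many right translates `W * {d}` cover the
separable group `G`, so some preimage `A = σ ⁻¹' (W * {d})` has positive Haar measure. By
Steinhaus' theorem `A / A` is a neighbourhood of `1` in `E`, and `σ` maps it into `W / W`.
-/

open MeasureTheory Set Pointwise Filter Topology

theorem Set.mul_singleton_div_mul_singleton {G : Type*} [Group G] (s t : Set G) (a : G) :
    s * {a} / (t * {a}) = s / t := by
  ext x
  constructor
  · rintro ⟨_, ⟨u, hu, _, rfl, rfl⟩, _, ⟨v, hv, _, rfl, rfl⟩, rfl⟩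
    exact ⟨u, hu, v, hv, (mul_div_mul_right_eq_div u v _).symm⟩
  · rintro ⟨u, hu, v, hv, rfl⟩
    exact ⟨u * a, mul_mem_mul hu rfl, v * a, mul_mem_mul hv rfl, mul_div_mul_right_eq_div u v a⟩

theorem Dense.iUnion_mul_singleton {G : Type*} [Group G] [TopologicalSpace G]
    [IsTopologicalGroup G] {D W : Set G} (hD : Dense D) (hW : W ∈ 𝓝 1) :
    ⋃ d ∈ D, W * {d} = univ := by
  refine eq_univ_of_forall fun g => ?_
  have hg : (fun d => g * d⁻¹) ⁻¹' W ∈ 𝓝 g :=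
    (continuous_const.mul continuous_inv).continuousAt.preimage_mem_nhds (by simpa using hW)
  obtain ⟨d, hdD, hd⟩ := hD.inter_nhds_nonempty hg
  exact mem_iUnion₂.2 ⟨d, hdD, g * d⁻¹, hd, d, rfl, inv_mul_cancel_right g d⟩

theorem exists_measure_preimage_mul_singleton_pos {X G : Type*} [MeasurableSpace X] [Group G]
    [TopologicalSpace G] [IsTopologicalGroup G] [TopologicalSpace.SeparableSpace G]
    (f : X → G) {μ : Measure X} (hμ : μ ≠ 0) {W : Set G} (hW : W ∈ 𝓝 1) :
    ∃ d, 0 < μ (f ⁻¹' (W * {d})) := by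
  obtain ⟨D, hD, hDdense⟩ := TopologicalSpace.exists_countable_dense G
  by_contra! h
  refine hμ (Measure.measure_univ_eq_zero.1 ?_)
  rw [← preimage_univ (f := f), ← hDdense.iUnion_mul_singleton hW, preimage_iUnion₂]
  exact (measure_biUnion_null_iff hD).2 fun d _ => nonpos_iff_eq_zero.1 (h d)

theorem MonoidHom.preimage_mul_singleton_div_subset {E G : Type*} [Group E] [Group G]
    (σ : E →* G) (W : Set G) (d : G) : σ ⁻¹' (W * {d}) / σ ⁻¹' (W * {d}) ⊆ σ ⁻¹' (W / W) :=
  (preimage_div_preimage_subset σ).trans_eq <| by rw [mul_singleton_div_mul_singleton]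

theorem stmt_11_general {E G : Type*}
    [Group E] [TopologicalSpace E] [IsTopologicalGroup E]
    [LocallyCompactSpace E] [SecondCountableTopology E] [MeasurableSpace E] [BorelSpace E]
    [Group G] [TopologicalSpace G] [IsTopologicalGroup G]
    [SecondCountableTopology G] [MeasurableSpace G] [BorelSpace G]
    (σ : E →* G) (hσ : Measurable σ) : Continuous σ := by
  refine continuous_of_continuousAt_one σ fun V hV => ?_
  rw [map_one] at hV
  obtain ⟨W₀, hW₀, hW₀V⟩ := exists_nhds_split_inv hV
  set W := interior W₀
  have hW : W ∈ 𝓝 1 := interior_mem_nhds.2 hW₀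
  have hWV : W / W ⊆ V := div_subset_iff.2 fun v hv w hw =>
    hW₀V v (interior_subset hv) w (interior_subset hw)
  obtain ⟨d, hd⟩ := exists_measure_preimage_mul_singleton_pos σ
    (NeZero.ne (Measure.haar : Measure E)) hW
  have hA : MeasurableSet (σ ⁻¹' (W * {d})) := hσ isOpen_interior.mul_right.measurableSet
  exact mem_map.2 <| mem_of_superset (Measure.div_mem_nhds_one_of_haar_pos _ _ hA hd)
    ((σ.preimage_mul_singleton_div_subset W d).trans (preimage_mono hWV))

/-- **Banach's theorem.** Every measurable group homomorphism between
locally compact second countable (hence Polish) topological groups is continuous. -/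
theorem stmt_11 {E G : Type*}
    [Group E] [TopologicalSpace E] [IsTopologicalGroup E] [T2Space E]
    [LocallyCompactSpace E] [SecondCountableTopology E] [MeasurableSpace E] [BorelSpace E]
    [Group G] [TopologicalSpace G] [IsTopologicalGroup G] [T2Space G]
    [LocallyCompactSpace G] [SecondCountableTopology G] [MeasurableSpace G] [BorelSpace G]
    (σ : E →* G) (hσ : Measurable σ) : Continuous σ :=
  stmt_11_general σ hσ
end

section
/- Let G and A be locally compact second countable topological groups with A abelian and a continuous G-action on A by automorphisms. Let F : G × G → A be a measurable 2-cocycle (F(s₁,s₂) + F(s₁s₂,s₃) = s₁·F(s₂,s₃) + F(s₁,s₂s₃)) that is continuous on U_F × U_F for some open neighbourhood U_F of the identity in G. Define the group E = A × G with multiplication (a₁,s₁)(a₂,s₂) = (a₁ + s₁·a₂ + F(s₁,s₂), s₁s₂), and topologize E by declaring left translates of the sets U_A × U_G (U_A, U_G open identity neighbourhoods with F continuous on U_G × U_G) to be a neighbourhood base. Then for every x ∈ E, the inner conjugation map y ↦ x y x⁻¹ is continuous at the identity of E. -/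
/-- The twisted multiplication on `A × G` determined by a 2-cocycle `F`. -/
def cocycleMul {G A : Type*} [Group G] [AddCommGroup A] [DistribMulAction G A]
    (F : G → G → A) (p q : A × G) : A × G :=
  (p.1 + p.2 • q.1 + F p.2 q.2, p.2 * q.2)

/-- The inverse for the twisted multiplication on `A × G`. -/
def cocycleInv {G A : Type*} [Group G] [AddCommGroup A] [DistribMulAction G A]
    (F : G → G → A) (p : A × G) : A × G :=
  (-(p.2⁻¹ • p.1) - p.2⁻¹ • F p.2 p.2⁻¹, p.2⁻¹)

/-!
Conjugating `(b, t)` by `x = (a, s)` gives `(s • b + h t, s t s⁻¹)` for a measurable `h : G → A`,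
so everything reduces to `h t → 0` as `t → 1`. Since conjugation is multiplicative, `h` is a
crossed homomorphism up to an error term `e t k` that is continuous near `(1, 1)` and vanishes at
`t = 1`. Steinhaus' theorem turns measurability into continuity: covering `A` by countably many
translates of a small compact neighbourhood `W` of `0`, some `K = {k | h k ∈ d + W}` near `1` has
positive Haar measure, so every `t` near `1` is `k₁ k⁻¹` with `k₁, k ∈ K`, and
`h t = (h k₁ - h k) + (h k - (s t s⁻¹) • h k) - e t k` is small, uniformly in `k`, by
compactness of `d + W` and of a neighbourhood of `1` containing `K`.
-/

open Set Filter Topology MeasureTheory Pointwise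

theorem exists_mem_nhds_zero_sub_add_sub_mem {A : Type*} [AddCommGroup A] [TopologicalSpace A]
    [IsTopologicalAddGroup A] {Z : Set A} (hZ : Z ∈ 𝓝 0) :
    ∃ N ∈ 𝓝 (0 : A), ∀ p ∈ N, ∀ q ∈ N, ∀ r ∈ N, ∀ s ∈ N, p - q + r - s ∈ Z := by
  obtain ⟨V, hV, hVZ⟩ := exists_nhds_zero_half hZ
  obtain ⟨W, hW, hWV⟩ := exists_nhds_zero_half hV
  refine ⟨W ∩ -W, inter_mem hW (neg_mem_nhds_zero A hW), fun p hp q hq r hr s hs => ?_⟩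
  have hsplit : p - q + r - s = (p + -q) + (r + -s) := by abel
  rw [hsplit]
  exact hVZ _ (hWV _ hp.1 _ hq.2) _ (hWV _ hr.1 _ hs.2)

theorem exists_div_mem_nhds_one_of_measurable {G A : Type*} [Group G] [TopologicalSpace G]
    [IsTopologicalGroup G] [LocallyCompactSpace G] [MeasurableSpace G] [BorelSpace G]
    [AddGroup A] [TopologicalSpace A] [IsTopologicalAddGroup A]
    [TopologicalSpace.SeparableSpace A] [MeasurableSpace A] [OpensMeasurableSpace A]
    {h : G → A} (hh : Measurable h) {V : Set G} (hV : V ∈ 𝓝 1) {W : Set A} (hW : W ∈ 𝓝 0) :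
    ∃ d : A, ∃ K ⊆ V, (∀ k ∈ K, h k - d ∈ W) ∧ K / K ∈ 𝓝 1 := by
  obtain ⟨C, hC, hCV, hCc⟩ := local_compact_nhds hV
  obtain ⟨D, hDc, hDd⟩ := TopologicalSpace.exists_countable_dense A
  let piece : A → Set G := fun d => interior C ∩ h ⁻¹' ((· - d) ⁻¹' interior W)
  have hpiece : ∀ d, MeasurableSet (piece d) := fun d =>
    isOpen_interior.measurableSet.inter
      (hh (isOpen_interior.preimage (continuous_sub_right d)).measurableSet)
  have hcover : interior C ⊆ ⋃ d ∈ D, piece d := by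
    intro k hk
    obtain ⟨d, hdD, hd⟩ := hDd.exists_mem_open
      (isOpen_interior.preimage (continuous_sub_left (h k))) ⟨h k, by
        simpa using mem_interior_iff_mem_nhds.2 hW⟩
    exact mem_biUnion hdD ⟨hk, hd⟩
  let μ : Measure G := Measure.haar
  obtain ⟨d, -, hd⟩ : ∃ d ∈ D, μ (piece d) ≠ 0 := by
    by_contra! hnull
    exact (isOpen_interior.measure_pos μ ⟨1, mem_interior_iff_mem_nhds.2 hC⟩).ne'
      (measure_mono_null hcover ((measure_biUnion_null_iff hDc).2 hnull))
  refine ⟨d, piece d, fun k hk => hCV (interior_subset hk.1),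
    fun k hk => interior_subset hk.2, ?_⟩
  exact Measure.div_mem_nhds_one_of_haar_pos_ne_top μ _ (hpiece d) (pos_iff_ne_zero.2 hd)
    (ne_top_of_le_ne_top hCc.measure_lt_top.ne (measure_mono fun k hk => interior_subset hk.1))

theorem tendsto_nhds_zero_of_measurable_of_map_mul {G A : Type*} [Group G] [TopologicalSpace G]
    [IsTopologicalGroup G] [LocallyCompactSpace G] [MeasurableSpace G] [BorelSpace G]
    [AddCommGroup A] [TopologicalSpace A] [IsTopologicalAddGroup A] [LocallyCompactSpace A]
    [TopologicalSpace.SeparableSpace A] [MeasurableSpace A] [OpensMeasurableSpace A]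
    {h : G → A} (hh : Measurable h) {ρ : G → A → A} (hρ : Continuous (Function.uncurry ρ))
    (hρ₁ : ∀ b, ρ 1 b = b) {e : G → G → A} {U : Set G} (hU : IsOpen U) (hU₁ : 1 ∈ U)
    (he : ContinuousOn (Function.uncurry e) (U ×ˢ U)) (he₁ : ∀ k ∈ U, e 1 k = 0)
    (hmul : ∀ t k, h (t * k) = h t + ρ t (h k) + e t k) :
    Tendsto h (𝓝 1) (𝓝 0) := by
  intro Z hZ
  rw [mem_map]
  obtain ⟨N, hN, hNZ⟩ := exists_mem_nhds_zero_sub_add_sub_mem hZ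
  obtain ⟨W, hW, hWN, hWc⟩ := local_compact_nhds hN
  obtain ⟨C, hC, hCU, hCc⟩ := local_compact_nhds (hU.mem_nhds hU₁)
  obtain ⟨d, K, hKC, hKW, hKK⟩ := exists_div_mem_nhds_one_of_measurable hh hC hW
  have hρ_near : ∀ᶠ t in 𝓝 1, ∀ b ∈ (d + ·) '' W, b - ρ t b ∈ N :=
    (hWc.image (continuous_const_add d)).eventually_forall_of_forall_eventually fun b _ => by
      have hc : Continuous fun z : G × A => z.2 - ρ z.1 z.2 := continuous_snd.sub hρ
      have hρb : Tendsto (fun z : G × A => z.2 - ρ z.1 z.2) (𝓝 (1, b)) (𝓝 0) := by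
        simpa [hρ₁] using hc.tendsto (1, b)
      exact hρb hN
  have he_near : ∀ᶠ t in 𝓝 1, ∀ k ∈ C, e t k ∈ N :=
    hCc.eventually_forall_of_forall_eventually fun k hk => by
      have hek : Tendsto (Function.uncurry e) (𝓝 (1, k)) (𝓝 0) := by
        simpa only [Function.uncurry_apply_pair, he₁ k (hCU hk)] using
          (he.continuousAt (prod_mem_nhds (hU.mem_nhds hU₁) (hU.mem_nhds (hCU hk)))).tendsto
      exact hek hN
  filter_upwards [hKK, hρ_near, he_near] with t ⟨k₁, hk₁, k, hk, hkt⟩ hρt het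
  have hk₁t : k₁ = t * k := by rw [← hkt, div_mul_cancel]
  have hsplit : h t = (h k₁ - d) - (h k - d) + (h k - ρ t (h k)) - e t k := by
    rw [hk₁t, hmul]; abel
  rw [mem_preimage, hsplit]
  exact hNZ _ (hWN (hKW k₁ hk₁)) _ (hWN (hKW k hk))
    _ (hρt _ ⟨h k - d, hKW k hk, add_sub_cancel d (h k)⟩) _ (het k (hKC hk))

section CocycleExtension

variable {G A : Type*} [Group G] [AddCommGroup A] [DistribMulAction G A] {F : G → G → A}

theorem cocycleMul_assoc
    (hcoc : ∀ s₁ s₂ s₃ : G, F s₁ s₂ + F (s₁ * s₂) s₃ = s₁ • F s₂ s₃ + F s₁ (s₂ * s₃))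
    (p q r : A × G) :
    cocycleMul F (cocycleMul F p q) r = cocycleMul F p (cocycleMul F q r) := by
  refine Prod.ext ?_ (mul_assoc _ _ _)
  calc p.1 + p.2 • q.1 + F p.2 q.2 + (p.2 * q.2) • r.1 + F (p.2 * q.2) r.2
      = p.1 + p.2 • q.1 + (p.2 * q.2) • r.1 + (F p.2 q.2 + F (p.2 * q.2) r.2) := by abel
    _ = p.1 + p.2 • q.1 + (p.2 * q.2) • r.1 + (p.2 • F q.2 r.2 + F p.2 (q.2 * r.2)) := by
        rw [hcoc]
    _ = p.1 + p.2 • (q.1 + q.2 • r.1 + F q.2 r.2) + F p.2 (q.2 * r.2) := by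
        rw [smul_add, smul_add, mul_smul]; abel

theorem zero_one_cocycleMul (hnorm₁ : ∀ s, F 1 s = 0) (q : A × G) :
    cocycleMul F (0, 1) q = q := by
  simp [cocycleMul, hnorm₁]

theorem cocycleInv_cocycleMul_self
    (hcoc : ∀ s₁ s₂ s₃ : G, F s₁ s₂ + F (s₁ * s₂) s₃ = s₁ • F s₂ s₃ + F s₁ (s₂ * s₃))
    (hnorm₁ : ∀ s, F 1 s = 0) (hnorm₂ : ∀ s, F s 1 = 0) (p : A × G) :
    cocycleMul F (cocycleInv F p) p = (0, 1) := by
  have h := hcoc p.2⁻¹ p.2 p.2⁻¹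
  rw [inv_mul_cancel, mul_inv_cancel, hnorm₁, hnorm₂, add_zero, add_zero] at h
  refine Prod.ext ?_ (inv_mul_cancel _)
  change -(p.2⁻¹ • p.1) - p.2⁻¹ • F p.2 p.2⁻¹ + p.2⁻¹ • p.1 + F p.2⁻¹ p.2 = 0
  rw [h]; abel

theorem cocycleInv_cocycleMul_cancel_left
    (hcoc : ∀ s₁ s₂ s₃ : G, F s₁ s₂ + F (s₁ * s₂) s₃ = s₁ • F s₂ s₃ + F s₁ (s₂ * s₃))
    (hnorm₁ : ∀ s, F 1 s = 0) (hnorm₂ : ∀ s, F s 1 = 0) (p q : A × G) :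
    cocycleMul F (cocycleInv F p) (cocycleMul F p q) = q := by
  rw [← cocycleMul_assoc hcoc, cocycleInv_cocycleMul_self hcoc hnorm₁ hnorm₂,
    zero_one_cocycleMul hnorm₁]

theorem conj_cocycleMul
    (hcoc : ∀ s₁ s₂ s₃ : G, F s₁ s₂ + F (s₁ * s₂) s₃ = s₁ • F s₂ s₃ + F s₁ (s₂ * s₃))
    (hnorm₁ : ∀ s, F 1 s = 0) (hnorm₂ : ∀ s, F s 1 = 0) (x y z : A × G) :
    cocycleMul F (cocycleMul F x (cocycleMul F y z)) (cocycleInv F x)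
      = cocycleMul F (cocycleMul F (cocycleMul F x y) (cocycleInv F x))
          (cocycleMul F (cocycleMul F x z) (cocycleInv F x)) := by
  simp only [cocycleMul_assoc hcoc, cocycleInv_cocycleMul_cancel_left hcoc hnorm₁ hnorm₂]

variable (F) in
/-- The `A`-component of `x (0, t) x⁻¹`. -/
def conjOffset (x : A × G) (t : G) : A :=
  x.1 + F x.2 t + (x.2 * t) • (cocycleInv F x).1 + F (x.2 * t) x.2⁻¹

theorem conj_eq_conjOffset (x : A × G) (b : A) (t : G) :
    cocycleMul F (cocycleMul F x (b, t)) (cocycleInv F x)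
      = (x.2 • b + conjOffset F x t, x.2 * t * x.2⁻¹) := by
  refine Prod.ext ?_ rfl
  simp only [cocycleMul, conjOffset]
  abel

theorem conjOffset_mul
    (hcoc : ∀ s₁ s₂ s₃ : G, F s₁ s₂ + F (s₁ * s₂) s₃ = s₁ • F s₂ s₃ + F s₁ (s₂ * s₃))
    (hnorm₁ : ∀ s, F 1 s = 0) (hnorm₂ : ∀ s, F s 1 = 0) (x : A × G) (t k : G) :
    conjOffset F x (t * k) = conjOffset F x t + (x.2 * t * x.2⁻¹) • conjOffset F x k
      + (F (x.2 * t * x.2⁻¹) (x.2 * k * x.2⁻¹) - x.2 • F t k) := by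
  have hmul := conj_cocycleMul hcoc hnorm₁ hnorm₂ x (0, t) (0, k)
  have hprod : cocycleMul F ((0 : A), t) (0, k) = (F t k, t * k) := by simp [cocycleMul]
  rw [hprod, conj_eq_conjOffset, conj_eq_conjOffset, conj_eq_conjOffset] at hmul
  have hfst := congrArg Prod.fst hmul
  simp only [cocycleMul, smul_zero, zero_add] at hfst
  rw [← add_sub_cancel_left (x.2 • F t k) (conjOffset F x (t * k)), hfst]
  abel

variable [TopologicalSpace G] [IsTopologicalGroup G] [MeasurableSpace G] [BorelSpace G]
  [TopologicalSpace A] [IsTopologicalAddGroup A] [MeasurableSpace A] [BorelSpace A]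
  [SecondCountableTopology A] [ContinuousSMul G A]

theorem measurable_conjOffset (hFmeas : Measurable (Function.uncurry F)) (x : A × G) :
    Measurable (conjOffset F x) := by
  have hleft : Measurable fun t => F x.2 t := hFmeas.comp measurable_prodMk_left
  have hright : Measurable fun t => F (x.2 * t) x.2⁻¹ :=
    hFmeas.comp ((measurable_const_mul x.2).prodMk measurable_const)
  have hsmul : Measurable fun t => (x.2 * t) • (cocycleInv F x).1 :=
    ((continuous_const_mul x.2).smul continuous_const).measurable
  exact ((measurable_const.add hleft).add hsmul).add hright

theorem tendsto_conjOffset [LocallyCompactSpace G] [LocallyCompactSpace A]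
    (hFmeas : Measurable (Function.uncurry F))
    (hcoc : ∀ s₁ s₂ s₃ : G, F s₁ s₂ + F (s₁ * s₂) s₃ = s₁ • F s₂ s₃ + F s₁ (s₂ * s₃))
    (hnorm₁ : ∀ s, F 1 s = 0) (hnorm₂ : ∀ s, F s 1 = 0) {U : Set G} (hU : IsOpen U)
    (hU₁ : 1 ∈ U) (hFU : ContinuousOn (Function.uncurry F) (U ×ˢ U)) (x : A × G) :
    Tendsto (conjOffset F x) (𝓝 1) (𝓝 0) := by
  set u : G → G := fun t => x.2 * t * x.2⁻¹
  have hu : Continuous u := by fun_prop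
  have hu₁ : u 1 = 1 := by simp [u]
  have hU' : IsOpen (U ∩ u ⁻¹' U) := hU.inter (hU.preimage hu)
  have he : ContinuousOn (Function.uncurry fun t k => F (u t) (u k) - x.2 • F t k)
      ((U ∩ u ⁻¹' U) ×ˢ (U ∩ u ⁻¹' U)) :=
    (hFU.comp (hu.prodMap hu).continuousOn fun p hp => ⟨hp.1.2, hp.2.2⟩).sub
      ((hFU.mono (prod_mono inter_subset_left inter_subset_left)).const_smul x.2)
  refine tendsto_nhds_zero_of_measurable_of_map_mul (measurable_conjOffset hFmeas x)
    (ρ := fun t b => u t • b) (by fun_prop) (by simp [hu₁]) hU' ⟨hU₁, by simp [hu₁, hU₁]⟩ he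
    (by simp [hu₁, hnorm₁]) (conjOffset_mul hcoc hnorm₁ hnorm₂ x)

end CocycleExtension

theorem stmt_12_general {G A : Type*}
    [Group G] [TopologicalSpace G] [IsTopologicalGroup G]
    [LocallyCompactSpace G] [MeasurableSpace G] [BorelSpace G]
    [AddCommGroup A] [TopologicalSpace A] [IsTopologicalAddGroup A]
    [LocallyCompactSpace A] [SecondCountableTopology A] [MeasurableSpace A] [BorelSpace A]
    [DistribMulAction G A] [ContinuousSMul G A]
    (F : G → G → A) (hFmeas : Measurable (Function.uncurry F))
    (hcoc : ∀ s₁ s₂ s₃ : G, F s₁ s₂ + F (s₁ * s₂) s₃ = s₁ • F s₂ s₃ + F s₁ (s₂ * s₃))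
    (hnorm₁ : ∀ s, F 1 s = 0) (hnorm₂ : ∀ s, F s 1 = 0)
    (U_F : Set G) (hUF : IsOpen U_F) (hUF1 : (1 : G) ∈ U_F)
    (hFcont : ContinuousOn (Function.uncurry F) (U_F ×ˢ U_F))
    (x : A × G) (UA : Set A) (UG : Set G)
    (hUA : IsOpen UA) (hUA0 : (0 : A) ∈ UA) (hUG : IsOpen UG) (hUG1 : (1 : G) ∈ UG) :
    ∃ (VA : Set A) (VG : Set G), IsOpen VA ∧ (0 : A) ∈ VA ∧ IsOpen VG ∧ (1 : G) ∈ VG ∧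
      ContinuousOn (Function.uncurry F) (VG ×ˢ VG) ∧
      ∀ y ∈ VA ×ˢ VG, cocycleMul F (cocycleMul F x y) (cocycleInv F x) ∈ UA ×ˢ UG := by
  obtain ⟨N, hN, hNUA⟩ := exists_nhds_zero_half (hUA.mem_nhds hUA0)
  have hVA : (x.2 • ·) ⁻¹' N ∈ 𝓝 (0 : A) :=
    (continuous_const_smul x.2).continuousAt.preimage_mem_nhds (by simpa using hN)
  have hVG : U_F ∩ ((fun t => x.2 * t * x.2⁻¹) ⁻¹' UG ∩ conjOffset F x ⁻¹' N) ∈ 𝓝 (1 : G) :=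
    inter_mem (hUF.mem_nhds hUF1) (inter_mem
      ((by fun_prop : Continuous fun t => x.2 * t * x.2⁻¹).continuousAt.preimage_mem_nhds
        (by simpa using hUG.mem_nhds hUG1))
      (tendsto_conjOffset hFmeas hcoc hnorm₁ hnorm₂ hUF hUF1 hFcont x hN))
  have hVGUF : interior (U_F ∩ ((fun t => x.2 * t * x.2⁻¹) ⁻¹' UG ∩ conjOffset F x ⁻¹' N))
      ⊆ U_F := fun t ht => (interior_subset ht).1
  refine ⟨_, _, isOpen_interior, mem_interior_iff_mem_nhds.2 hVA, isOpen_interior,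
    mem_interior_iff_mem_nhds.2 hVG, hFcont.mono (prod_mono hVGUF hVGUF), ?_⟩
  rintro ⟨b, t⟩ ⟨hb, ht⟩
  have hbN := interior_subset hb
  obtain ⟨-, htUG, htN⟩ := interior_subset ht
  rw [conj_eq_conjOffset]
  exact ⟨hNUA _ hbN _ htN, htUG⟩

/-- Let `G`, `A` be locally compact second countable groups, `A` a
continuous `G`-module, and `F` a measurable normalized 2-cocycle continuous on
`U_F × U_F`. In the extension `E = A ×_F G`, whose topology has as a neighbourhood base
at the identity the products `U_A × U_G` with `F` continuous on `U_G × U_G` (and their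
left translates elsewhere), inner conjugation by any element `x` is continuous at the
identity: every basic neighbourhood of the identity contains the conjugate of some basic
neighbourhood. -/
theorem stmt_12 {G A : Type*}
    [Group G] [TopologicalSpace G] [IsTopologicalGroup G]
    [LocallyCompactSpace G] [SecondCountableTopology G] [MeasurableSpace G] [BorelSpace G]
    [AddCommGroup A] [TopologicalSpace A] [IsTopologicalAddGroup A]
    [LocallyCompactSpace A] [SecondCountableTopology A] [MeasurableSpace A] [BorelSpace A]
    [DistribMulAction G A] [ContinuousSMul G A]
    (F : G → G → A) (hFmeas : Measurable (Function.uncurry F))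
    (hcoc : ∀ s₁ s₂ s₃ : G, F s₁ s₂ + F (s₁ * s₂) s₃ = s₁ • F s₂ s₃ + F s₁ (s₂ * s₃))
    (hnorm₁ : ∀ s, F 1 s = 0) (hnorm₂ : ∀ s, F s 1 = 0)
    (U_F : Set G) (hUF : IsOpen U_F) (hUF1 : (1 : G) ∈ U_F)
    (hFcont : ContinuousOn (Function.uncurry F) (U_F ×ˢ U_F))
    (x : A × G) (UA : Set A) (UG : Set G)
    (hUA : IsOpen UA) (hUA0 : (0 : A) ∈ UA) (hUG : IsOpen UG) (hUG1 : (1 : G) ∈ UG)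
    (hFUG : ContinuousOn (Function.uncurry F) (UG ×ˢ UG)) :
    ∃ (VA : Set A) (VG : Set G), IsOpen VA ∧ (0 : A) ∈ VA ∧ IsOpen VG ∧ (1 : G) ∈ VG ∧
      ContinuousOn (Function.uncurry F) (VG ×ˢ VG) ∧
      ∀ y ∈ VA ×ˢ VG, cocycleMul F (cocycleMul F x y) (cocycleInv F x) ∈ UA ×ˢ UG :=
  stmt_12_general F hFmeas hcoc hnorm₁ hnorm₂ U_F hUF hUF1 hFcont x UA UG hUA hUA0 hUG hUG1
end

section
/- Let G and A be locally compact second countable topological groups, A abelian, with a continuous action of G on A. If a measurable 2-cocycle F : G × G → A that is continuous near the identity is the coboundary of some measurable 1-cochain (i.e. its class is trivial in H²_m(G,A)), then F is the coboundary of a measurable 1-cochain that is continuous near the identity (i.e. its class is trivial in H²_lcm(G,A)). Equivalently, the natural map H²_lcm(G,A) → H²_m(G,A) is injective. -/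
/-!
The measurable cochain `h` with `F = δh` is itself continuous near the identity. Since `A` is
separable, countably many translates `a + O` of a small open `O ∋ 0` cover `A`, so `h` sends a set
`S` of positive Haar measure near `1` into a single `a + O`; by Steinhaus, every `s` near `1`
satisfies `v, s v ∈ S` for some `v`. The coboundary relation `h (s v) = h s + s • h v - F s v`
then writes `h s - h 1` as a sum of the small terms `h (s v) - a`, `-s • (h v - a)`, `a - s • a`
and `F s v - F 1 1`. Translating by `s₀` propagates continuity to the points where `F` is continuous.
-/

open Filter Set MeasureTheory Topology Pointwise Function

theorem exists_measure_inter_sub_mem_ne_zero {X A : Type*} [MeasurableSpace X] {μ : Measure X}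
    [AddGroup A] [TopologicalSpace A] [ContinuousSub A] [TopologicalSpace.SeparableSpace A]
    (h : X → A) {T : Set X} (hT : μ T ≠ 0) {O : Set A} (hO : IsOpen O) (hO0 : (0 : A) ∈ O) :
    ∃ a : A, μ (T ∩ {x | h x - a ∈ O}) ≠ 0 := by
  obtain ⟨D, hD, hDense⟩ := TopologicalSpace.exists_countable_dense A
  have hcover : T ⊆ ⋃ a ∈ D, T ∩ {x | h x - a ∈ O} := by
    intro x hx
    obtain ⟨a, haD, ha⟩ := hDense.exists_mem_open (hO.preimage (continuous_sub_left (h x)))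
      ⟨h x, by simpa using hO0⟩
    exact mem_biUnion haD ⟨hx, ha⟩
  by_contra! hnull
  exact hT (measure_mono_null hcover ((measure_biUnion_null_iff hD).mpr fun a _ ↦ hnull a))

theorem Measurable.exists_eventually_exists_sub_mem {G A : Type*}
    [Group G] [TopologicalSpace G] [IsTopologicalGroup G] [LocallyCompactSpace G]
    [MeasurableSpace G] [BorelSpace G]
    [AddGroup A] [TopologicalSpace A] [ContinuousSub A] [TopologicalSpace.SeparableSpace A]
    [MeasurableSpace A] [OpensMeasurableSpace A]
    {h : G → A} (hh : Measurable h) {O : Set A} (hO : O ∈ 𝓝 0) {V : Set G} (hV : V ∈ 𝓝 1) :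
    ∃ a : A, ∀ᶠ s in 𝓝 1, ∃ v ∈ V, h v - a ∈ O ∧ h (s * v) - a ∈ O := by
  obtain ⟨K, hK, hK1⟩ := exists_compact_mem_nhds (1 : G)
  set T := interior (V ∩ K)
  have hT : IsOpen T := isOpen_interior
  have hTpos : (Measure.haar : Measure G) T ≠ 0 :=
    hT.measure_ne_zero _ ⟨1, mem_interior_iff_mem_nhds.mpr (inter_mem hV hK1)⟩
  obtain ⟨a, ha⟩ := exists_measure_inter_sub_mem_ne_zero h hTpos isOpen_interior
    (mem_interior_iff_mem_nhds.mpr hO)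
  set S := T ∩ {x | h x - a ∈ interior O}
  have hS : MeasurableSet S :=
    hT.measurableSet.inter (hh (isOpen_interior.preimage (continuous_sub_right a)).measurableSet)
  have hSfin : Measure.haar S ≠ ⊤ :=
    ne_top_of_le_ne_top (hK.measure_lt_top.ne)
      (measure_mono (inter_subset_left.trans (interior_subset.trans inter_subset_right)))
  refine ⟨a, mem_of_superset (Measure.div_mem_nhds_one_of_haar_pos_ne_top Measure.haar S hS
    (pos_iff_ne_zero.mpr ha) hSfin) ?_⟩
  rintro s ⟨u, ⟨-, hu⟩, v, ⟨hvT, hv⟩, huv⟩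
  rw [div_eq_iff_eq_mul] at huv
  exact ⟨v, (interior_subset hvT).1, interior_subset hv, huv ▸ interior_subset hu⟩

section Coboundary

variable {G A : Type*} [Group G] [TopologicalSpace G] [AddCommGroup A] [TopologicalSpace A]
  [IsTopologicalAddGroup A] [DistribMulAction G A] {F : G → G → A} {h : G → A}

theorem continuousAt_one_of_eq_coboundary [IsTopologicalGroup G] [LocallyCompactSpace G]
    [MeasurableSpace G] [BorelSpace G] [TopologicalSpace.SeparableSpace A] [MeasurableSpace A]
    [OpensMeasurableSpace A] [ContinuousSMul G A]
    (hh : Measurable h) (hF : ContinuousAt (uncurry F) (1, 1))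
    (hFh : ∀ s t : G, F s t = s • h t - h (s * t) + h s) :
    ContinuousAt h 1 := by
  rw [ContinuousAt, ← tendsto_sub_nhds_zero_iff, (𝓝 (0 : A)).basis_sets.tendsto_right_iff]
  intro N hN
  obtain ⟨W, hW, hWN⟩ := exists_nhds_zero_quarter hN
  have hsmul : ∀ᶠ p in 𝓝 ((1 : G), (0 : A)), -(p.1 • p.2) ∈ W :=
    (continuous_smul.neg.tendsto ((1 : G), (0 : A))).eventually_mem (by simpa using hW)
  obtain ⟨M, hM, O, hO, hMO⟩ := mem_nhds_prod_iff.mp hsmul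
  have hFW : ∀ᶠ p in 𝓝 ((1 : G), (1 : G)), F p.1 p.2 - F 1 1 ∈ W :=
    (hF.tendsto.sub_const (F 1 1)).eventually_mem (by simpa using hW)
  rw [nhds_prod_eq, eventually_prod_self_iff'] at hFW
  obtain ⟨V, hV, hFV⟩ := hFW
  obtain ⟨a, ha⟩ := hh.exists_eventually_exists_sub_mem (inter_mem hW hO) hV
  have haW : ∀ᶠ s in 𝓝 (1 : G), a - s • a ∈ W :=
    ((continuous_const.sub (continuous_id.smul continuous_const)).tendsto (1 : G)).eventually_mem
      (by simpa using hW)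
  filter_upwards [ha, haW, hM, hV] with s ⟨v, hvV, hv, hsv⟩ hsa hsM hsV
  have key : h s - h 1 = (h (s * v) - a) + -(s • (h v - a)) + (a - s • a) + (F s v - F 1 1) := by
    rw [hFh s v, hFh 1 1, smul_sub, one_mul, one_smul]
    abel
  rw [key]
  exact hWN hsv.1 (hMO (mk_mem_prod hsM hv.2)) hsa (hFV s hsV v hvV)

theorem continuousAt_of_eq_coboundary [ContinuousMul G] [ContinuousConstSMul G A]
    (hFh : ∀ s t : G, F s t = s • h t - h (s * t) + h s) (h1 : ContinuousAt h 1) {s₀ : G}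
    (hF : ContinuousAt (uncurry F) (s₀, 1)) :
    ContinuousAt h s₀ := by
  have hshift : h = fun x ↦ h s₀ + s₀ • h (s₀⁻¹ * x) - F s₀ (s₀⁻¹ * x) := by
    funext x
    rw [hFh s₀, mul_inv_cancel_left]
    abel
  have hτ : ContinuousAt (s₀⁻¹ * ·) s₀ := (continuous_const_mul _).continuousAt
  have h1' : ContinuousAt h (s₀⁻¹ * s₀) := by rwa [inv_mul_cancel]
  have hF' : ContinuousAt (uncurry F) (s₀, s₀⁻¹ * s₀) := by rwa [inv_mul_cancel]
  rw [hshift]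
  exact (continuousAt_const.add ((h1'.comp hτ).const_smul s₀)).sub
    (hF'.comp (f := fun x ↦ (s₀, s₀⁻¹ * x)) (continuousAt_const.prodMk hτ))

end Coboundary

theorem stmt_13_general {G A : Type*}
    [Group G] [TopologicalSpace G] [IsTopologicalGroup G]
    [LocallyCompactSpace G] [MeasurableSpace G] [BorelSpace G]
    [AddCommGroup A] [TopologicalSpace A] [IsTopologicalAddGroup A]
    [SecondCountableTopology A] [MeasurableSpace A] [BorelSpace A]
    [DistribMulAction G A] [ContinuousSMul G A]
    (F : G → G → A)
    (hFcont : ∃ U : Set G, IsOpen U ∧ (1 : G) ∈ U ∧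
      ContinuousOn (Function.uncurry F) (U ×ˢ U))
    (htriv : ∃ h : G → A, Measurable h ∧
      ∀ s t : G, F s t = s • h t - h (s * t) + h s) :
    ∃ h : G → A, Measurable h ∧
      (∃ U : Set G, IsOpen U ∧ (1 : G) ∈ U ∧ ContinuousOn h U) ∧
      ∀ s t : G, F s t = s • h t - h (s * t) + h s := by
  obtain ⟨U, hUo, hU1, hFU⟩ := hFcont
  obtain ⟨h, hh, hFh⟩ := htriv
  have hF : ∀ s ∈ U, ContinuousAt (uncurry F) (s, 1) := fun s hs ↦
    hFU.continuousAt ((hUo.prod hUo).mem_nhds ⟨hs, hU1⟩)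
  have h1 : ContinuousAt h 1 := continuousAt_one_of_eq_coboundary hh (hF 1 hU1) hFh
  exact ⟨h, hh, ⟨U, hUo, hU1, fun s hs ↦
    (continuousAt_of_eq_coboundary hFh h1 (hF s hs)).continuousWithinAt⟩, hFh⟩

/-- The natural map `H²_lcm(G,A) → H²_m(G,A)` is injective: if a
measurable 2-cocycle `F` which is continuous on a neighbourhood of the identity is the
coboundary of a measurable 1-cochain, then it is the coboundary of a measurable 1-cochain
which is continuous on a neighbourhood of the identity. -/
theorem stmt_13 {G A : Type*}
    [Group G] [TopologicalSpace G] [IsTopologicalGroup G]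
    [LocallyCompactSpace G] [SecondCountableTopology G] [MeasurableSpace G] [BorelSpace G]
    [AddCommGroup A] [TopologicalSpace A] [IsTopologicalAddGroup A]
    [LocallyCompactSpace A] [SecondCountableTopology A] [MeasurableSpace A] [BorelSpace A]
    [DistribMulAction G A] [ContinuousSMul G A]
    (F : G → G → A) (hFmeas : Measurable (Function.uncurry F))
    (hcoc : ∀ s₁ s₂ s₃ : G, F s₁ s₂ + F (s₁ * s₂) s₃ = s₁ • F s₂ s₃ + F s₁ (s₂ * s₃))
    (hFcont : ∃ U : Set G, IsOpen U ∧ (1 : G) ∈ U ∧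
      ContinuousOn (Function.uncurry F) (U ×ˢ U))
    (htriv : ∃ h : G → A, Measurable h ∧
      ∀ s t : G, F s t = s • h t - h (s * t) + h s) :
    ∃ h : G → A, Measurable h ∧
      (∃ U : Set G, IsOpen U ∧ (1 : G) ∈ U ∧ ContinuousOn h U) ∧
      ∀ s t : G, F s t = s • h t - h (s * t) + h s :=
  stmt_13_general F hFcont htriv
end

section
/- Let G be a complex Lie group and A a holomorphic G-module. Every measurable crossed homomorphism c : G → A (c(st) = c(s) + s·c(t)) that is holomorphic on a neighbourhood of the identity is holomorphic on all of G. Hence H¹_lhm(G,A) equals the group of holomorphic crossed homomorphisms from G to A. -/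
/-!
The cocycle identity gives `c x = c g + g • c (g⁻¹ * x)`, which writes `c` near `g` as `c` near `1`
composed with a left translation of `G`, the action of `g` on `A` and a translation of `A`, all of
them holomorphic.
-/

open scoped Manifold

theorem eq_add_smul_comp_inv_mul_of_crossedHom {G A : Type*} [Group G] [Add A] [SMul G A]
    {c : G → A} (hcoc : ∀ s t : G, c (s * t) = c s + s • c t) (g : G) :
    c = fun x => c g + g • c (g⁻¹ * x) := by
  funext x
  rw [← hcoc, mul_inv_cancel_left]

section CrossedHom

variable {𝕜 : Type*} [NontriviallyNormedField 𝕜]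
  {EG HG : Type*} [NormedAddCommGroup EG] [NormedSpace 𝕜 EG] [TopologicalSpace HG]
  {I : ModelWithCorners 𝕜 EG HG}
  {EA HA : Type*} [NormedAddCommGroup EA] [NormedSpace 𝕜 EA] [TopologicalSpace HA]
  {J : ModelWithCorners 𝕜 EA HA}
  {G : Type*} [TopologicalSpace G] [ChartedSpace HG G]
  {A : Type*} [TopologicalSpace A] [ChartedSpace HA A] [SMul G A]

theorem mdifferentiable_const_smul_of_mdifferentiable_smul
    (hact : MDifferentiable (I.prod J) J (fun p : G × A => p.1 • p.2)) (g : G) :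
    MDifferentiable J J (fun a : A => g • a) := fun a =>
  (hact (g, a)).comp a (mdifferentiableAt_const.prodMk mdifferentiableAt_id)

theorem mdifferentiable_of_crossedHom_of_mdifferentiableAt_one [Group G] [AddMonoid A]
    [ContMDiffMul I 1 G] [ContMDiffAdd J 1 A]
    (hact : MDifferentiable (I.prod J) J (fun p : G × A => p.1 • p.2))
    {c : G → A} (hcoc : ∀ s t : G, c (s * t) = c s + s • c t)
    (hc : MDifferentiableAt I J c 1) :
    MDifferentiable I J c := by
  intro g
  have hc' : MDifferentiableAt I J c (g⁻¹ * g) := by rwa [inv_mul_cancel]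
  rw [eq_add_smul_comp_inv_mul_of_crossedHom hcoc g]
  exact mdifferentiableAt_add_left.comp g
    ((mdifferentiable_const_smul_of_mdifferentiable_smul hact g _).comp g
      (hc'.comp g mdifferentiableAt_mul_left))

end CrossedHom

theorem stmt_16_general {EG EA : Type*}
    [NormedAddCommGroup EG] [NormedSpace ℂ EG] [NormedAddCommGroup EA] [NormedSpace ℂ EA]
    {G : Type*} [Group G] [TopologicalSpace G] [ChartedSpace EG G]
    [LieGroup 𝓘(ℂ, EG) (⊤ : ℕ∞) G]
    {A : Type*} [AddCommGroup A] [TopologicalSpace A] [ChartedSpace EA A]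
    [LieAddGroup 𝓘(ℂ, EA) (⊤ : ℕ∞) A]
    [DistribMulAction G A]
    (hact : MDifferentiable (𝓘(ℂ, EG).prod 𝓘(ℂ, EA)) 𝓘(ℂ, EA)
      (fun p : G × A => p.1 • p.2))
    (c : G → A)
    (hcoc : ∀ s t : G, c (s * t) = c s + s • c t)
    (U : Set G) (hU : IsOpen U) (hU1 : (1 : G) ∈ U)
    (hhol : MDifferentiableOn 𝓘(ℂ, EG) 𝓘(ℂ, EA) c U) :
    MDifferentiable 𝓘(ℂ, EG) 𝓘(ℂ, EA) c :=
  mdifferentiable_of_crossedHom_of_mdifferentiableAt_one hact hcoc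
    (hhol.mdifferentiableAt (hU.mem_nhds hU1))

/-- Let `G` be a complex Lie group and `A` a holomorphic `G`-module.
Every measurable crossed homomorphism `c : G → A` which is holomorphic (i.e. ℂ-differentiable
in the manifold sense) on a neighbourhood of the identity is holomorphic on all of `G`;
hence `H¹_lhm(G,A)` is the group of holomorphic crossed homomorphisms. -/
theorem stmt_16 {EG EA : Type*}
    [NormedAddCommGroup EG] [NormedSpace ℂ EG] [NormedAddCommGroup EA] [NormedSpace ℂ EA]
    {G : Type*} [Group G] [TopologicalSpace G] [ChartedSpace EG G]
    [LieGroup 𝓘(ℂ, EG) (⊤ : ℕ∞) G]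
    {A : Type*} [AddCommGroup A] [TopologicalSpace A] [ChartedSpace EA A]
    [LieAddGroup 𝓘(ℂ, EA) (⊤ : ℕ∞) A]
    [MeasurableSpace G] [BorelSpace G] [MeasurableSpace A] [BorelSpace A]
    [DistribMulAction G A]
    (hact : MDifferentiable (𝓘(ℂ, EG).prod 𝓘(ℂ, EA)) 𝓘(ℂ, EA)
      (fun p : G × A => p.1 • p.2))
    (c : G → A) (hcmeas : Measurable c)
    (hcoc : ∀ s t : G, c (s * t) = c s + s • c t)
    (U : Set G) (hU : IsOpen U) (hU1 : (1 : G) ∈ U)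
    (hhol : MDifferentiableOn 𝓘(ℂ, EG) 𝓘(ℂ, EA) c U) :
    MDifferentiable 𝓘(ℂ, EG) 𝓘(ℂ, EA) c :=
  stmt_16_general hact c hcoc U hU hU1 hhol
end
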